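/- Let M : α ↦ M_α be a matroid flock on E, let α ∈ ℤ^E, and let J ⊆ E. If M_α = M_{α+e_J}, then λ_{M_α}(J) = 0, where λ_N(J) := r_N(J) + r_N(E \ J) − r_N(E) is the connectivity function of the matroid N. -/

import Mathlib

open Matroid Set

namespace FrobFlock

variable {E : Type*}

/-- The local rank function of a matroid: the size of a largest independent subset of `X`. -/
noncomputable def rk (M : Matroid E) (X : Set E) : ℕ :=
  sSup {n | ∃ I, I ⊆ X ∧ M.Indep I ∧ I.ncard = n}

/-- Deletion of the set `D` from the matroid `M`. -/
def mdel (M : Matroid E) (D : Set E) : Matroid E := M ↾ (M.E \ D)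

/-- Contraction of the set `C` in the matroid `M` (defined by duality). -/
def mcon (M : Matroid E) (C : Set E) : Matroid E := (mdel M✶ C)✶

/-- The 0/1 indicator vector of a set `I ⊆ E`. -/
noncomputable def eVec (I : Set E) : E → ℤ := I.indicator 1

/-- `M : ℤ^E → Matroid E` is a matroid flock of rank `d` on `E`:
each `M α` is a matroid on ground set `E` of rank `d`, satisfying (MF1) and (MF2). -/
def IsMatroidFlock [Fintype E] (d : ℕ) (M : (E → ℤ) → Matroid E) : Prop :=
  (∀ α, (M α).E = Set.univ) ∧
  (∀ α, rk (M α) Set.univ = d) ∧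
  (∀ α (i : E), mcon (M α) {i} = mdel (M (α + eVec {i})) {i}) ∧
  (∀ α, M α = M (α + 1))

/-- A matroid valuation `ν : binom(E,d) → ℤ ∪ {∞}`, encoded as a function on all finsets
which takes the value `⊤` outside `binom(E,d)`. -/
def IsValuation [DecidableEq E] (d : ℕ) (ν : Finset E → WithTop ℤ) : Prop :=
  (∀ B : Finset E, B.card ≠ d → ν B = ⊤) ∧
  (∃ B : Finset E, B.card = d ∧ ν B ≠ ⊤) ∧
  (∀ B B' : Finset E, B.card = d → B'.card = d → ∀ i ∈ B \ B', ∃ j ∈ B' \ B,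
      ν (insert j (B.erase i)) + ν (insert i (B'.erase j)) ≤ ν B + ν B')

/-- `B ∈ B^ν_α`: the set `B` attains the supremum `g^ν(α)`, i.e. `B` is a basis of `M^ν_α`. -/
def OptBasis (d : ℕ) (ν : Finset E → WithTop ℤ) (α : E → ℤ) (B : Finset E) : Prop :=
  B.card = d ∧ ν B ≠ ⊤ ∧ ∀ B' : Finset E, B'.card = d →
    ((∑ i ∈ B', α i : ℤ) : WithTop ℤ) + ν B ≤ ((∑ i ∈ B, α i : ℤ) : WithTop ℤ) + ν B'

/-! Iterating (MF1) over the elements of `J` gives `M_α ／ J = M_{α+e_J} ＼ J = M_α ＼ J`. In a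
matroid whose contraction and deletion of `J` agree, a basis of `J` and a basis of `E \ J` are
jointly independent, so the rank of `E` is the sum of the ranks of `J` and `E \ J`. -/

lemma eVec_insert {i : E} {s : Set E} (h : i ∉ s) :
    eVec (insert i s) = eVec {i} + eVec s := by
  funext x
  by_cases hx : x = i
  · subst hx; simp [eVec, h]
  · by_cases hxs : x ∈ s <;> simp [eVec, hx, hxs]

lemma contract_eq_delete_add_eVec {M : (E → ℤ) → Matroid E}
    (hM : ∀ α (i : E), M α ／ {i} = M (α + eVec {i}) ＼ {i}) {s : Set E} (hs : s.Finite) :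
    ∀ β, M β ／ s = M (β + eVec s) ＼ s := by
  induction s, hs using Set.Finite.induction_on with
  | empty => simp [eVec, ← Pi.zero_def]
  | @insert i t hit _ ih =>
    intro β
    rw [← singleton_union, ← contract_contract, hM, ← contract_delete_comm _
      (disjoint_singleton_right.2 hit), ih,
      delete_delete, union_comm, singleton_union, eVec_insert hit, add_assoc]

lemma _root_.Matroid.eRk_add_eRk_sdiff_eq_eRank_of_contract_eq_delete {M : Matroid E} {X : Set E}
    (h : M ／ X = M ＼ X) : M.eRk X + M.eRk (M.E \ X) = M.eRank := by
  obtain ⟨I, hI⟩ := M.exists_isBasis' X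
  obtain ⟨L, hL⟩ := M.exists_isBasis (M.E \ X)
  have hLI : M.Indep (L ∪ I) ∧ Disjoint X L := by
    rw [← hI.contract_indep_iff, h, delete_indep_iff]
    exact ⟨hL.indep, disjoint_sdiff_right.mono_right hL.subset |>.symm⟩
  refine le_antisymm ?_ ?_
  · calc M.eRk X + M.eRk (M.E \ X) = (L ∪ I).encard := by
          rw [← hI.encard_eq_eRk, ← hL.encard_eq_eRk, add_comm,
            encard_union_eq (hLI.2.mono_left hI.subset).symm]
      _ ≤ M.eRank := hLI.1.encard_le_eRank
  · calc M.eRank = M.eRk (X ∪ (M.E \ X)) := by rw [union_sdiff_self, eRk_union_ground]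
      _ ≤ M.eRk X + M.eRk (M.E \ X) := M.eRk_union_le_eRk_add_eRk X _

lemma cast_rk_eq_eRk [Finite E] (M : Matroid E) (X : Set E) : (rk M X : ℕ∞) = M.eRk X := by
  obtain ⟨I, hI⟩ := M.exists_isBasis' X
  have hle : ∀ n ∈ {n | ∃ J, J ⊆ X ∧ M.Indep J ∧ J.ncard = n}, n ≤ I.ncard := by
    rintro n ⟨J, hJX, hJ, rfl⟩
    have := hJ.encard_le_eRk_of_subset hJX
    rw [← hI.encard_eq_eRk, ← J.toFinite.cast_ncard_eq, ← I.toFinite.cast_ncard_eq] at this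
    exact_mod_cast this
  have hrk : rk M X = I.ncard :=
    le_antisymm (csSup_le ⟨_, I, hI.subset, hI.indep, rfl⟩ hle)
      (le_csSup ⟨_, hle⟩ ⟨I, hI.subset, hI.indep, rfl⟩)
  rw [hrk, I.toFinite.cast_ncard_eq, hI.encard_eq_eRk]

/-- **Lemma.** Let `M : α ↦ M_α` be a matroid flock on `E`, let `α ∈ ℤ^E` and `J ⊆ E`.
If `M_α = M_{α+e_J}`, then `λ_{M_α}(J) = 0`, where
`λ_N(J) = r_N(J) + r_N(E \ J) − r_N(E)` is the connectivity function. -/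
theorem flock_step_connectivity_zero [Fintype E] (d : ℕ) (M : (E → ℤ) → Matroid E)
    (hM : IsMatroidFlock d M) (α : E → ℤ) (J : Set E)
    (h : M α = M (α + eVec J)) :
    (rk (M α) J : ℤ) + (rk (M α) Jᶜ : ℤ) - (rk (M α) Set.univ : ℤ) = 0 := by
  -- `mcon` and `mdel` unfold to Mathlib's `／` and `＼`, so (MF1) applies as it stands.
  have hJ : M α ／ J = M α ＼ J := by
    rw [contract_eq_delete_add_eVec hM.2.2.1 J.toFinite, ← h]
  have hsum := (M α).eRk_add_eRk_sdiff_eq_eRank_of_contract_eq_delete hJ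
  rw [hM.1 α, ← compl_eq_univ_sdiff, ← eRk_univ_eq, ← cast_rk_eq_eRk, ← cast_rk_eq_eRk,
    ← cast_rk_eq_eRk] at hsum
  have hrk : rk (M α) J + rk (M α) Jᶜ = rk (M α) univ := by exact_mod_cast hsum
  omega

end FrobFlock
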